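/- Let 𝔄 be a von Neumann algebra on a complex Hilbert space H, and let p_1 and p_2 be projections in 𝔄 such that the range of p_2 is not contained in the range of p_1. Let s ∈ 𝔄 be the orthogonal projection of H onto the closure of (range p_1) + (range p_2). If p_2 is a minimal projection in 𝔄, then e = s − p_1 is a minimal projection in 𝔄. -/

import Mathlib

/-!
Put `q = s - p₁` and `a = q p₂ ∈ 𝔄`. Minimality of `p₂` forces every self-adjoint element `c` of
the corner `p₂ 𝔄 p₂` to be a real multiple of `p₂`: if `c` had two distinct nonzero spectral
points `α, β`, functional calculus would give nonzero corner elements `c φ(c)` and `ψ(c) c` with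
zero product, whereas the range projection of a nonzero corner element lies in `𝔄` below `p₂`,
hence is `p₂`. So `a* a = r p₂` with `r ≠ 0`. The range of `q` lies in the closure of
`q (range p₁ + range p₂) = range a`, so `r⁻¹ a a*`, which fixes `a`, is `q`. For a projection
`e ≤ q` in `𝔄`, the corner element `a* e a` is then a multiple of `p₂`, and conjugating back by
`a` makes `e` a multiple of `q`, i.e. `0` or `q`.
-/

variable {H : Type*} [NormedAddCommGroup H] [InnerProductSpace ℂ H] [CompleteSpace H]

/-- A projection on a Hilbert space: a self-adjoint idempotent bounded operator. -/
def IsProjectionCLM (p : H →L[ℂ] H) : Prop := IsSelfAdjoint p ∧ IsIdempotentElem p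

/-- A minimal projection of a von Neumann algebra `𝔄`: a nonzero projection `p ∈ 𝔄` such that
every projection `e ∈ 𝔄` whose range is contained in the range of `p` is `0` or `p`. -/
def IsMinimalProjectionIn (𝔄 : VonNeumannAlgebra H) (p : H →L[ℂ] H) : Prop :=
  IsProjectionCLM p ∧ p ∈ 𝔄 ∧ p ≠ 0 ∧
    ∀ e : H →L[ℂ] H, IsProjectionCLM e → e ∈ 𝔄 →
      LinearMap.range (e : H →ₗ[ℂ] H) ≤ LinearMap.range (p : H →ₗ[ℂ] H) → e = 0 ∨ e = p

lemma isProjectionCLM_iff_isStarProjection {p : H →L[ℂ] H} :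
    IsProjectionCLM p ↔ IsStarProjection p :=
  ⟨fun h => ⟨h.2, h.1⟩, fun h => ⟨h.2, h.1⟩⟩

lemma IsProjectionCLM.sub_of_mul_eq_right {p s : H →L[ℂ] H} (hp : IsProjectionCLM p)
    (hs : IsProjectionCLM s) (h : s * p = p) : IsProjectionCLM (s - p) :=
  isProjectionCLM_iff_isStarProjection.2 <|
    (isProjectionCLM_iff_isStarProjection.1 hp).sub_of_mul_eq_right
      (isProjectionCLM_iff_isStarProjection.1 hs) h

section RangeOrder

variable {R M : Type*} [Semiring R] [TopologicalSpace M] [AddCommMonoid M] [Module R M]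
  {p e : M →L[R] M}

lemma range_le_range_of_mul_eq (h : p * e = e) :
    LinearMap.range (e : M →ₗ[R] M) ≤ LinearMap.range (p : M →ₗ[R] M) := by
  rintro _ ⟨x, rfl⟩
  exact ⟨e x, congr($h x)⟩

lemma IsIdempotentElem.mul_eq_of_range_le (hp : IsIdempotentElem p)
    (h : LinearMap.range (e : M →ₗ[R] M) ≤ LinearMap.range (p : M →ₗ[R] M)) : p * e = e := by
  ext x
  obtain ⟨y, hy⟩ := h ⟨x, rfl⟩
  change p y = e x at hy
  change p (e x) = e x
  rw [← hy]
  exact congr($hp.eq y)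

lemma mul_eq_of_mul_mul_eq [T2Space M] [ContinuousAdd M] [ContinuousConstSMul R M]
    {T q s p₁ p₂ : M →L[R] M}
    (hs : LinearMap.range (s : M →ₗ[R] M) ≤
      (LinearMap.range (p₁ : M →ₗ[R] M) ⊔ LinearMap.range (p₂ : M →ₗ[R] M)).topologicalClosure)
    (hqs : q * s = q) (hqp₁ : q * p₁ = 0) (hT : T * (q * p₂) = q * p₂) : T * q = q := by
  have hle : LinearMap.range (s : M →ₗ[R] M) ≤
      LinearMap.eqLocus ((T * q : M →L[R] M) : M →ₗ[R] M) q := by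
    refine hs.trans <| Submodule.topologicalClosure_minimal _ (sup_le ?_ ?_)
      (ContinuousLinearMap.isClosed_eqLocus _ _)
    · rintro _ ⟨x, rfl⟩
      have hx : q (p₁ x) = 0 := congr($hqp₁ x)
      simp [hx]
    · rintro _ ⟨x, rfl⟩
      exact congr($hT x)
  ext x
  rw [← hqs, ← mul_assoc]
  exact hle ⟨x, rfl⟩

end RangeOrder

lemma mul_eq_of_mul_eq_of_isSelfAdjoint {A : Type*} [Mul A] [StarMul A] {p e : A}
    (hp : IsSelfAdjoint p) (he : IsSelfAdjoint e) (h : p * e = e) : e * p = e := by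
  simpa [star_mul, hp.star_eq, he.star_eq] using congr(star $h)

lemma IsIdempotentElem.eq_zero_or_eq_of_eq_smul {𝕜 A : Type*} [Field 𝕜] [Ring A] [Algebra 𝕜 A]
    {q e : A} (hq : IsIdempotentElem q) (hq0 : q ≠ 0) (he : IsIdempotentElem e) {t : 𝕜}
    (het : e = t • q) : e = 0 ∨ e = q := by
  have ht : IsIdempotentElem t := smul_left_injective 𝕜 hq0 <|
    calc (t * t) • q = (t • q) * (t • q) := by rw [smul_mul_smul_comm, hq.eq]
      _ = t • q := by rw [← het, he.eq]
  rcases IsIdempotentElem.iff_eq_zero_or_one.1 ht with rfl | rfl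
  · exact Or.inl (by rw [het, zero_smul])
  · exact Or.inr (by rw [het, one_smul])

lemma mul_star_eq_smul_of_forall_mul_eq {A : Type*} [Ring A] [StarRing A] [Algebra ℝ A]
    [StarModule ℝ A] {a p q : A} {r : ℝ} (hq : IsSelfAdjoint q) (hqa : q * a = a) (hap : a * p = a)
    (hr : star a * a = r • p) (hr0 : r ≠ 0) (hfix : ∀ T : A, T * a = a → T * q = q) :
    a * star a = r • q := by
  have hTa : (r⁻¹ • (a * star a)) * a = a := by
    rw [smul_mul_assoc, mul_assoc, hr, mul_smul_comm, hap, smul_smul, inv_mul_cancel₀ hr0, one_smul]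
  have hqT : q * (r⁻¹ • (a * star a)) = r⁻¹ • (a * star a) := by
    rw [mul_smul_comm, ← mul_assoc, hqa]
  have hT : r⁻¹ • (a * star a) = q := hqT.symm.trans <| mul_eq_of_mul_eq_of_isSelfAdjoint
    ((IsSelfAdjoint.all _).smul (.mul_star_self a)) hq (hfix _ hTa)
  rw [← hT, smul_smul, mul_inv_cancel₀ hr0, one_smul]

lemma exists_continuous_mul_eq_zero_of_ne {α β : ℝ} (h : α ≠ β) :
    ∃ φ ψ : ℝ → ℝ, Continuous φ ∧ Continuous ψ ∧ φ α ≠ 0 ∧ ψ β ≠ 0 ∧ ∀ t, φ t * ψ t = 0 := by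
  have hδ : 0 < |α - β| / 2 := by simpa [sub_eq_zero] using h
  refine ⟨fun t => max (|α - β| / 2 - |t - α|) 0, fun t => max (|α - β| / 2 - |t - β|) 0,
    by fun_prop, by fun_prop, by simpa using hδ.ne', by simpa using hδ.ne', fun t => ?_⟩
  have : |α - β| ≤ |t - α| + |t - β| := by
    simpa [abs_sub_comm] using abs_sub_le α t β
  rcases le_total (|α - β| / 2) |t - α| with hα | hα
  · simp [max_eq_right (sub_nonpos.2 hα)]
  · simp [max_eq_right (by linarith : |α - β| / 2 - |t - β| ≤ 0)]

section FunctionalCalculus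

variable {A : Type*} [CStarAlgebra A] {c : A}

lemma cfc_ne_zero_of_mem_spectrum (hc : IsSelfAdjoint c) {f : ℝ → ℝ} (hf : Continuous f) {α : ℝ}
    (hα : α ∈ spectrum ℝ c) (hfα : f α ≠ 0) : cfc f c ≠ 0 := fun h =>
  hfα (eqOn_of_cfc_eq_cfc (h.trans (cfc_zero ℝ c).symm) hf.continuousOn (by fun_prop) hc hα)

lemma IsSelfAdjoint.mul_self_eq_smul_of_spectrum_subset (hc : IsSelfAdjoint c) {r : ℝ}
    (h : spectrum ℝ c ⊆ {0, r}) : c * c = r • c := by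
  have : cfc (fun t : ℝ => t * t) c = cfc (fun t : ℝ => r * t) c :=
    cfc_congr fun t ht => by rcases h ht with rfl | rfl <;> simp
  rwa [cfc_mul (fun t : ℝ => t) (fun t : ℝ => t) c, cfc_const_mul r (fun t : ℝ => t) c,
    cfc_id' ℝ c] at this

end FunctionalCalculus

namespace VonNeumannAlgebra

variable (𝔄 : VonNeumannAlgebra H)

lemma real_smul_mem {c : H →L[ℂ] H} (hc : c ∈ 𝔄) (r : ℝ) : r • c ∈ 𝔄 := by
  rw [← Complex.coe_smul]
  exact 𝔄.smul_mem hc _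

lemma cfc_mem {c : H →L[ℂ] H} (hc : c ∈ 𝔄) (f : ℝ → ℝ) : cfc f c ∈ 𝔄 := by
  rw [← 𝔄.commutant_commutant, mem_commutant_iff] at hc ⊢
  exact fun u hu => (Commute.cfc_real (hc u hu).symm f).eq.symm

lemma starProjection_topologicalClosure_range_mem {x : H →L[ℂ] H} (hx : x ∈ 𝔄) :
    (LinearMap.range (x : H →ₗ[ℂ] H)).topologicalClosure.starProjection ∈ 𝔄 := by
  rw [IsStarProjection.mem_iff isStarProjection_starProjection, Submodule.range_starProjection]
  intro u hu
  have hxu : x * u = u * x := mem_commutant_iff.1 hu x hx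
  rw [Module.End.mem_invtSubmodule]
  refine Submodule.topologicalClosure_minimal _ ?_
    (Submodule.isClosed_topologicalClosure _ |>.preimage u.continuous)
  rintro _ ⟨y, rfl⟩
  simp only [Submodule.mem_comap, ContinuousLinearMap.coe_coe]
  change (u * x) y ∈ _
  rw [← hxu]
  exact Submodule.le_topologicalClosure _ ⟨u y, rfl⟩

end VonNeumannAlgebra

namespace IsMinimalProjectionIn

variable {𝔄 : VonNeumannAlgebra H} {p : H →L[ℂ] H}

lemma topologicalClosure_range_eq (hp : IsMinimalProjectionIn 𝔄 p) {x : H →L[ℂ] H} (hx : x ∈ 𝔄)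
    (hpx : p * x = x) (hx0 : x ≠ 0) :
    (LinearMap.range (x : H →ₗ[ℂ] H)).topologicalClosure = LinearMap.range (p : H →ₗ[ℂ] H) := by
  set K := (LinearMap.range (x : H →ₗ[ℂ] H)).topologicalClosure
  have hK : K ≤ LinearMap.range (p : H →ₗ[ℂ] H) :=
    Submodule.topologicalClosure_minimal _ (range_le_range_of_mul_eq hpx)
      (ContinuousLinearMap.IsIdempotentElem.isClosed_range hp.1.2)
  rcases hp.2.2.2 K.starProjection
      (isProjectionCLM_iff_isStarProjection.2 isStarProjection_starProjection)
      (𝔄.starProjection_topologicalClosure_range_mem hx) (by rwa [Submodule.range_starProjection])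
    with h | h
  · refine absurd ?_ hx0
    have hK0 : K = ⊥ := by
      rw [← Submodule.range_starProjection K, h, ContinuousLinearMap.toLinearMap_zero,
        LinearMap.range_zero]
    ext y
    have hy : x y ∈ K := Submodule.le_topologicalClosure _ ⟨y, rfl⟩
    simpa [hK0] using hy
  · rw [← Submodule.range_starProjection K, h]

lemma eq_zero_of_mul_eq_zero (hp : IsMinimalProjectionIn 𝔄 p) {x y : H →L[ℂ] H} (hx : x ∈ 𝔄)
    (hpx : p * x = x) (hx0 : x ≠ 0) (hyp : y * p = y) (hyx : y * x = 0) : y = 0 := by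
  have hker : LinearMap.range (p : H →ₗ[ℂ] H) ≤ LinearMap.ker (y : H →ₗ[ℂ] H) := by
    rw [← hp.topologicalClosure_range_eq hx hpx hx0]
    refine Submodule.topologicalClosure_minimal _ ?_ (ContinuousLinearMap.isClosed_ker y)
    rintro _ ⟨z, rfl⟩
    exact congr($hyx z)
  rw [← hyp]
  ext z
  exact hker ⟨z, rfl⟩

variable {c : H →L[ℂ] H}

lemma eq_of_mem_spectrum (hp : IsMinimalProjectionIn 𝔄 p) (hc : c ∈ 𝔄) (hsa : IsSelfAdjoint c)
    (hpc : p * c = c) {α β : ℝ} (hα : α ∈ spectrum ℝ c) (hβ : β ∈ spectrum ℝ c)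
    (hα0 : α ≠ 0) (hβ0 : β ≠ 0) : α = β := by
  by_contra hne
  obtain ⟨φ, ψ, hφ, hψ, hφα, hψβ, hφψ⟩ := exists_continuous_mul_eq_zero_of_ne hne
  have hcp : c * p = c := mul_eq_of_mul_eq_of_isSelfAdjoint hp.1.1 hsa hpc
  have hx : cfc (fun t => t * φ t) c = c * cfc φ c := by
    rw [cfc_mul (fun t : ℝ => t) φ c, cfc_id' ℝ c]
  have hy : cfc (fun t => ψ t * t) c = cfc ψ c * c := by
    rw [cfc_mul ψ (fun t : ℝ => t) c, cfc_id' ℝ c]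
  have hyx : cfc (fun t => ψ t * t) c * cfc (fun t => t * φ t) c = 0 := by
    have : (fun t => ψ t * t * (t * φ t)) = 0 := funext fun t => by
      simp only [Pi.zero_apply]
      linear_combination (t * t) * hφψ t
    rw [← cfc_mul .., this, cfc_zero]
  have hx0 : cfc (fun t => t * φ t) c ≠ 0 :=
    cfc_ne_zero_of_mem_spectrum hsa (by fun_prop) hα (mul_ne_zero hα0 hφα)
  have hy0 : cfc (fun t => ψ t * t) c ≠ 0 :=
    cfc_ne_zero_of_mem_spectrum hsa (by fun_prop) hβ (mul_ne_zero hψβ hβ0)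
  exact hy0 <| hp.eq_zero_of_mul_eq_zero (𝔄.cfc_mem hc _) (by rw [hx, ← mul_assoc, hpc]) hx0
    (by rw [hy, mul_assoc, hcp]) hyx

lemma exists_eq_smul (hp : IsMinimalProjectionIn 𝔄 p) (hc : c ∈ 𝔄) (hsa : IsSelfAdjoint c)
    (hpc : p * c = c) : ∃ r : ℝ, c = r • p := by
  obtain ⟨r, hr⟩ : ∃ r : ℝ, spectrum ℝ c ⊆ {0, r} := by
    by_cases h : ∃ r ∈ spectrum ℝ c, r ≠ 0
    · obtain ⟨r, hr, hr0⟩ := h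
      exact ⟨r, fun t ht => or_iff_not_imp_left.2 fun ht0 =>
        hp.eq_of_mem_spectrum hc hsa hpc ht hr ht0 hr0⟩
    · simp only [not_exists, not_and, not_not] at h
      exact ⟨0, fun t ht => Or.inl (h t ht)⟩
  have hcc := hsa.mul_self_eq_smul_of_spectrum_subset hr
  rcases eq_or_ne r 0 with rfl | hr0
  · refine ⟨0, ?_⟩
    rw [zero_smul, ← CStarRing.star_mul_self_eq_zero_iff, hsa.star_eq, hcc, zero_smul]
  have he : IsProjectionCLM (r⁻¹ • c) := by
    refine ⟨(IsSelfAdjoint.all _).smul hsa, ?_⟩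
    rw [IsIdempotentElem, smul_mul_smul_comm, hcc, smul_smul, mul_assoc, inv_mul_cancel₀ hr0,
      mul_one]
  rcases hp.2.2.2 _ he (𝔄.real_smul_mem hc _)
      (range_le_range_of_mul_eq (by rw [mul_smul_comm, hpc])) with h | h
  · exact ⟨0, by rw [zero_smul]; exact (smul_eq_zero.1 h).resolve_left (inv_ne_zero hr0)⟩
  · exact ⟨r, by rw [← h, smul_smul, mul_inv_cancel₀ hr0, one_smul]⟩

lemma of_mul_star_eq_smul (hp : IsMinimalProjectionIn 𝔄 p) {q a : H →L[ℂ] H}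
    (hq : IsProjectionCLM q) (hq𝔄 : q ∈ 𝔄) (hq0 : q ≠ 0) (ha : a ∈ 𝔄) (hap : a * p = a) {r : ℝ}
    (hr : r ≠ 0) (haa : a * star a = r • q) : IsMinimalProjectionIn 𝔄 q := by
  refine ⟨hq, hq𝔄, hq0, fun e he he𝔄 hle => ?_⟩
  have hqe : q * e = e := hq.2.mul_eq_of_range_le hle
  have heq : e * q = e := mul_eq_of_mul_eq_of_isSelfAdjoint hq.1 he.1 hqe
  have hpa : p * star a = star a := by
    simpa [star_mul, hp.1.1.star_eq] using congr(star $hap)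
  obtain ⟨μ, hμ⟩ := hp.exists_eq_smul (c := star a * e * a)
    (mul_mem (mul_mem (star_mem ha) he𝔄) ha)
    (by simp only [IsSelfAdjoint, star_mul, star_star, he.1.star_eq, mul_assoc])
    (by rw [← mul_assoc, ← mul_assoc, hpa])
  have key : (r * r) • e = (μ * r) • q :=
    calc (r * r) • e = (r • q) * e * (r • q) := by
          simp only [smul_mul_assoc, mul_smul_comm, hqe, heq, smul_smul]
      _ = a * (star a * e * a) * star a := by simp only [← haa, mul_assoc]
      _ = (μ * r) • q := by rw [hμ, mul_smul_comm, smul_mul_assoc, hap, haa, smul_smul]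
  refine hq.2.eq_zero_or_eq_of_eq_smul hq0 he.2 (t := (r * r)⁻¹ * (μ * r)) ?_
  rw [← smul_smul, ← key, smul_smul, inv_mul_cancel₀ (mul_ne_zero hr hr), one_smul]

end IsMinimalProjectionIn

theorem sup_sub_projection_minimal_general
    (𝔄 : VonNeumannAlgebra H) (p₁ p₂ s : H →L[ℂ] H)
    (hp₁ : IsProjectionCLM p₁) (hp₁A : p₁ ∈ 𝔄)
    (hnle : ¬ LinearMap.range (p₂ : H →ₗ[ℂ] H) ≤ LinearMap.range (p₁ : H →ₗ[ℂ] H))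
    (hs : IsProjectionCLM s) (hsA : s ∈ 𝔄)
    (hsrange : LinearMap.range (s : H →ₗ[ℂ] H)
      = (LinearMap.range (p₁ : H →ₗ[ℂ] H) ⊔ LinearMap.range (p₂ : H →ₗ[ℂ] H)).topologicalClosure)
    (hmin : IsMinimalProjectionIn 𝔄 p₂) :
    IsMinimalProjectionIn 𝔄 (s - p₁) := by
  have hsp : ∀ {p : H →L[ℂ] H}, LinearMap.range (p : H →ₗ[ℂ] H) ≤
      LinearMap.range (p₁ : H →ₗ[ℂ] H) ⊔ LinearMap.range (p₂ : H →ₗ[ℂ] H) → s * p = p :=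
    fun h => hs.2.mul_eq_of_range_le (hsrange ▸ h.trans (Submodule.le_topologicalClosure _))
  have hsp₁ : s * p₁ = p₁ := hsp le_sup_left
  have hq := hp₁.sub_of_mul_eq_right hs hsp₁
  set q := s - p₁ with hq_def
  set a := q * p₂ with ha_def
  have ha𝔄 : a ∈ 𝔄 := mul_mem (sub_mem hsA hp₁A) hmin.2.1
  have hap : a * p₂ = a := by rw [mul_assoc, hmin.1.2.eq]
  have ha0 : a ≠ 0 := fun h => hnle <| range_le_range_of_mul_eq <| by
    rwa [ha_def, hq_def, sub_mul, hsp le_sup_right, sub_eq_zero, eq_comm] at h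
  have hpa : p₂ * star a = star a := by simpa [star_mul, hmin.1.1.star_eq] using congr(star $hap)
  obtain ⟨r, hr⟩ := hmin.exists_eq_smul (c := star a * a) (mul_mem (star_mem ha𝔄) ha𝔄)
    (.star_mul_self a) (by rw [← mul_assoc, hpa])
  have hr0 : r ≠ 0 := by
    rintro rfl
    exact ha0 ((CStarRing.star_mul_self_eq_zero_iff a).1 (by rw [hr, zero_smul]))
  have hqs : q * s = q := by
    rw [hq_def, sub_mul, hs.2.eq, mul_eq_of_mul_eq_of_isSelfAdjoint hs.1 hp₁.1 hsp₁]
  have hqp₁ : q * p₁ = 0 := by rw [hq_def, sub_mul, hsp₁, hp₁.2.eq, sub_self]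
  have haa : a * star a = r • q := mul_star_eq_smul_of_forall_mul_eq hq.1
    (by rw [← mul_assoc, hq.2.eq]) hap hr hr0
    fun T hT => mul_eq_of_mul_mul_eq hsrange.le hqs hqp₁ hT
  exact hmin.of_mul_star_eq_smul hq (sub_mem hsA hp₁A) (fun h => ha0 (by rw [ha_def, h, zero_mul]))
    ha𝔄 hap hr0 haa

/-- Let `p₁, p₂` be projections in a von Neumann algebra `𝔄` with `range p₂ ⊄ range p₁`, and
let `s ∈ 𝔄` be the orthogonal projection onto the closure of `range p₁ + range p₂`.  If `p₂`
is a minimal projection in `𝔄`, then `s - p₁` is a minimal projection in `𝔄`. -/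
theorem sup_sub_projection_minimal
    (𝔄 : VonNeumannAlgebra H) (p₁ p₂ s : H →L[ℂ] H)
    (hp₁ : IsProjectionCLM p₁) (hp₁A : p₁ ∈ 𝔄)
    (hp₂ : IsProjectionCLM p₂) (hp₂A : p₂ ∈ 𝔄)
    (hnle : ¬ LinearMap.range (p₂ : H →ₗ[ℂ] H) ≤ LinearMap.range (p₁ : H →ₗ[ℂ] H))
    (hs : IsProjectionCLM s) (hsA : s ∈ 𝔄)
    (hsrange : LinearMap.range (s : H →ₗ[ℂ] H)
      = (LinearMap.range (p₁ : H →ₗ[ℂ] H) ⊔ LinearMap.range (p₂ : H →ₗ[ℂ] H)).topologicalClosure)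
    (hmin : IsMinimalProjectionIn 𝔄 p₂) :
    IsMinimalProjectionIn 𝔄 (s - p₁) :=
  sup_sub_projection_minimal_general 𝔄 p₁ p₂ s hp₁ hp₁A hnle hs hsA hsrange hmin
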